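/- arXiv:2406.13175 — 2 statements merged into one kernel-verified Lean document; each statement's English description precedes it below -/
import Mathlib

section
/- Let A be a real m×n matrix with singular values σ₁ ≥ σ₂ ≥ … ≥ σ_{min(m,n)} ≥ 0, and let r be an integer with 0 ≤ r < min(m,n). Then for every real m×n matrix B with rank(B) ≤ r one has ‖A − B‖₂ ≥ σ_{r+1}; that is, no rank-r approximation of A can achieve spectral-norm error smaller than the (r+1)-th singular value of A. -/
open Matrix

/-- The spectral norm (operator norm induced by the Euclidean norm) of a real
`m × n` matrix. -/
noncomputable def matrixSpectralNorm {m n : ℕ} (A : Matrix (Fin m) (Fin n) ℝ) : ℝ :=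
  ‖LinearMap.toContinuousLinearMap (Matrix.toEuclideanLin A)‖

/-- **Eckart–Young (lower bound part).**  Let `A` be a real `m × n` matrix and let
`σ : Fin n → ℝ` list the square roots of the eigenvalues of `Aᵀ * A` in
decreasing order (so `σ 0 ≥ σ 1 ≥ …` are the singular values of `A`, padded by
zeros).  For every `r < min m n` and every `m × n` matrix `B` with
`rank B ≤ r`, one has `‖A - B‖₂ ≥ σ r` (the `(r+1)`-th singular value,
`1`-based): no rank-`r` approximation beats the `(r+1)`-th singular value. -/
theorem eckart_young_lower_bound {m n : ℕ} (A : Matrix (Fin m) (Fin n) ℝ)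
    (hH : (Aᵀ * A).IsHermitian)
    (σ : Fin n → ℝ) (hσ : Antitone σ)
    (hσ_eig : ∃ e : Equiv.Perm (Fin n), ∀ i, σ i = Real.sqrt (hH.eigenvalues (e i)))
    (r : ℕ) (hr : r < min m n)
    (B : Matrix (Fin m) (Fin n) ℝ) (hB : B.rank ≤ r) :
    matrixSpectralNorm (A - B) ≥ σ ⟨r, lt_of_lt_of_le hr (min_le_right m n)⟩ := by
  obtain ⟨e, he⟩ := hσ_eig
  have hrn : r < n := lt_of_lt_of_le hr (min_le_right m n)
  set ρ : Fin n := ⟨r, hrn⟩ with hρ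
  -- eigenvalues are nonneg
  have hpsd : PosSemidef (Aᵀ * A) := by
    have : Aᴴ = Aᵀ := Matrix.conjTranspose_eq_transpose_of_trivial A
    simpa [this] using Matrix.posSemidef_conjTranspose_mul_self A
  have heig_nonneg : ∀ j, 0 ≤ hH.eigenvalues j := fun j => hpsd.eigenvalues_nonneg j
  have hσρ : 0 ≤ σ ρ := (he ρ) ▸ Real.sqrt_nonneg _
  set v := hH.eigenvectorBasis with hv
  -- the family of top r+1 singular vectors
  set g : Fin (r + 1) → Fin n := fun i => e (Fin.castLE hrn i) with hg
  have hginj : Function.Injective g :=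
    e.injective.comp (Fin.castLE_injective hrn)
  set f : Fin (r + 1) → EuclideanSpace ℝ (Fin n) := fun i => v (g i) with hf
  have hfon : Orthonormal ℝ f := v.orthonormal.comp g hginj
  set W : Submodule ℝ (EuclideanSpace ℝ (Fin n)) := Submodule.span ℝ (Set.range f) with hW
  have hWrank : Module.finrank ℝ W = r + 1 := by
    rw [finrank_span_eq_card hfon.linearIndependent, Fintype.card_fin]
  set K : Submodule ℝ (EuclideanSpace ℝ (Fin n)) :=
    LinearMap.ker (Matrix.toEuclideanLin B) with hK
  have hKrank : n ≤ B.rank + Module.finrank ℝ K := by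
    have h1 : B.rank = Module.finrank ℝ (LinearMap.range (Matrix.toEuclideanLin B)) := by
      rw [Matrix.toEuclideanLin_eq_toLin]
      exact Matrix.rank_eq_finrank_range_toLin B (PiLp.basisFun _ _ _) (PiLp.basisFun _ _ _)
    rw [h1, LinearMap.finrank_range_add_finrank_ker, finrank_euclideanSpace, Fintype.card_fin]
  -- W ⊓ K is nontrivial
  obtain ⟨x, hxWK, hx0⟩ : ∃ x ∈ W ⊓ K, x ≠ 0 := by
    have hsum : n < Module.finrank ℝ W + Module.finrank ℝ K := by
      have : n - r ≤ Module.finrank ℝ K := by omega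
      omega
    have hfin : 0 < Module.finrank ℝ (W ⊓ K : Submodule ℝ _) := by
      have h2 := Submodule.finrank_sup_add_finrank_inf_eq W K
      have h3 : Module.finrank ℝ (W ⊔ K : Submodule ℝ _) ≤ n := by
        simpa [finrank_euclideanSpace] using
          Submodule.finrank_le (W ⊔ K : Submodule ℝ (EuclideanSpace ℝ (Fin n)))
      omega
    have hne : (W ⊓ K : Submodule ℝ _) ≠ ⊥ := by
      intro h
      rw [h, finrank_bot] at hfin
      exact lt_irrefl 0 hfin
    exact Submodule.exists_mem_ne_zero_of_ne_bot hne
  obtain ⟨hxW, hxK⟩ := hxWK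
  set c : Fin n → ℝ := fun j => inner ℝ (v j) x with hc
  -- coefficients vanish off the top r+1 eigenvectors
  have hcoeff : ∀ j, j ∉ Set.range g → c j = 0 := by
    intro j hj
    have hle : W ≤ (Submodule.span ℝ {v j})ᗮ := by
      rw [hW, Submodule.span_le]
      rintro _ ⟨i, rfl⟩
      rw [SetLike.mem_coe, Submodule.mem_orthogonal_singleton_iff_inner_right]
      exact v.orthonormal.2 (fun h => hj ⟨i, h.symm⟩)
    exact Submodule.mem_orthogonal_singleton_iff_inner_right.mp (hle hxW)
  -- spectral computation
  have hBspec : ∀ j, Matrix.toEuclideanLin (Aᵀ * A) (v j) = hH.eigenvalues j • v j := by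
    intro j
    apply (WithLp.equiv 2 _).injective
    simp only [WithLp.equiv_apply, Matrix.ofLp_toEuclideanLin_apply]
    simpa using hH.mulVec_eigenvectorBasis j
  have hexpand : (inner ℝ (Matrix.toEuclideanLin (Aᵀ * A) x) x : ℝ)
      = ∑ j, hH.eigenvalues j * (c j) ^ 2 := by
    have hx' : (Matrix.toEuclideanLin (Aᵀ * A)) x
        = ∑ j, (hH.eigenvalues j * v.repr x j) • v j := by
      conv_lhs => rw [← v.sum_repr x]
      rw [map_sum]
      refine Finset.sum_congr rfl fun j _ => ?_
      rw [LinearMap.map_smul, hBspec j, smul_smul, mul_comm]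
    rw [hx', sum_inner]
    refine Finset.sum_congr rfl fun j _ => ?_
    rw [real_inner_smul_left, v.repr_apply_apply]
    simp only [hc]
    ring
  have hnormx : ‖x‖ ^ 2 = ∑ j, (c j) ^ 2 := by
    have h := v.sum_inner_mul_inner x x
    rw [← real_inner_self_eq_norm_sq, ← h]
    refine Finset.sum_congr rfl fun j _ => ?_
    simp only [hc]
    rw [real_inner_comm x (v j), sq]
  -- ⟪(AᵀA)x, x⟫ = ‖Ax‖²
  have hAq : (inner ℝ (Matrix.toEuclideanLin (Aᵀ * A) x) x : ℝ)
      = ‖Matrix.toEuclideanLin A x‖ ^ 2 := by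
    rw [← real_inner_self_eq_norm_sq]
    simp only [Matrix.toEuclideanLin_apply, PiLp.inner_apply, RCLike.inner_apply,
      starRingEnd_apply, star_trivial, PiLp.toLp_apply]
    have : ((Aᵀ * A) *ᵥ (WithLp.equiv 2 _ x)) ⬝ᵥ (WithLp.equiv 2 _ x)
        = (A *ᵥ (WithLp.equiv 2 _ x)) ⬝ᵥ (A *ᵥ (WithLp.equiv 2 _ x)) := by
      rw [← Matrix.mulVec_mulVec, Matrix.mulVec_transpose, ← dotProduct_mulVec]
    simpa [dotProduct, mul_comm] using this
  -- the key lower bound on ‖Ax‖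
  have hlow : σ ρ * ‖x‖ ≤ ‖Matrix.toEuclideanLin A x‖ := by
    have hsq : (σ ρ * ‖x‖) ^ 2 ≤ ‖Matrix.toEuclideanLin A x‖ ^ 2 := by
      rw [mul_pow, ← hAq, hexpand, hnormx, Finset.mul_sum]
      refine Finset.sum_le_sum fun j _ => ?_
      by_cases hj : j ∈ Set.range g
      · obtain ⟨i, rfl⟩ := hj
        have h1 : σ ρ ≤ σ (Fin.castLE hrn i) := by
          apply hσ
          exact Fin.mk_le_mk.mpr (Nat.lt_succ_iff.mp i.isLt)
        have h2 : σ (Fin.castLE hrn i) = Real.sqrt (hH.eigenvalues (g i)) := he _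
        have h3 : σ ρ ^ 2 ≤ hH.eigenvalues (g i) := by
          calc σ ρ ^ 2 ≤ σ (Fin.castLE hrn i) ^ 2 := by
                exact pow_le_pow_left₀ hσρ h1 2
            _ = hH.eigenvalues (g i) := by
                rw [h2, Real.sq_sqrt (heig_nonneg _)]
        exact mul_le_mul_of_nonneg_right h3 (sq_nonneg _)
      · rw [hcoeff j hj]
        simp
    have h4 : 0 ≤ σ ρ * ‖x‖ := mul_nonneg hσρ (norm_nonneg _)
    nlinarith [norm_nonneg (Matrix.toEuclideanLin A x)]
  -- conclude
  have hABx : Matrix.toEuclideanLin (A - B) x = Matrix.toEuclideanLin A x := by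
    rw [map_sub, LinearMap.sub_apply, LinearMap.mem_ker.mp hxK, sub_zero]
  have hxpos : 0 < ‖x‖ := norm_pos_iff.mpr hx0
  have hop : ‖Matrix.toEuclideanLin (A - B) x‖
      ≤ matrixSpectralNorm (A - B) * ‖x‖ := by
    exact (LinearMap.toContinuousLinearMap (Matrix.toEuclideanLin (A - B))).le_opNorm x
  rw [hABx] at hop
  have : σ ρ * ‖x‖ ≤ matrixSpectralNorm (A - B) * ‖x‖ := le_trans hlow hop
  exact le_of_mul_le_mul_right this hxpos
end

section
/- Let S₁ and S₂ be real m×m matrices that have no common nonzero rows (so that S₁ᵀ S₂ = 0), and define 𝒜₁ = I + S₁ and 𝒜₂ = I + S₂. Then the number of nonzero entries of 𝒜₁ᵀ 𝒜₂ satisfies nnz(𝒜₁ᵀ 𝒜₂) ≤ m + nnz(S₁) + nnz(S₂); equivalently, the Adapter Weight Orthogonality Ratio satisfies AWOR(𝒜₁, 𝒜₂) = 1 − nnz(𝒜₁ᵀ 𝒜₂)/m² ≥ 1 − (m + nnz(S₁) + nnz(S₂))/m², so the sparsity of the product is at least one minus the sum of the densities of the individual adapters and non-overlapping SHiRA-Struct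 adapters are nearly orthogonal when the individual adapters are highly sparse. -/
open Matrix

/-- The number of nonzero entries of a real `m × m` matrix. -/
noncomputable def nnz {m : ℕ} (M : Matrix (Fin m) (Fin m) ℝ) : ℕ :=
  Set.ncard {p : Fin m × Fin m | M p.1 p.2 ≠ 0}

lemma nnz_transpose {m : ℕ} (M : Matrix (Fin m) (Fin m) ℝ) : nnz Mᵀ = nnz M := by
  unfold nnz
  have : {p : Fin m × Fin m | Mᵀ p.1 p.2 ≠ 0} =
      Prod.swap '' {p : Fin m × Fin m | M p.1 p.2 ≠ 0} := by
    ext ⟨i, j⟩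
    simp [Matrix.transpose_apply, Prod.swap_eq_iff_eq_swap]
  rw [this, Set.ncard_image_of_injective _ Prod.swap_injective]

/-- **Non-overlapping SHiRA-Struct adapters are nearly orthogonal.**
If `S₁`, `S₂` have no common nonzero rows, then for the SHiRA-Struct adapters
`𝒜₁ = I + S₁` and `𝒜₂ = I + S₂` the number of nonzero entries of `𝒜₁ᵀ * 𝒜₂`
is at most `m + nnz S₁ + nnz S₂`; equivalently, the Adapter Weight
Orthogonality Ratio satisfies
`AWOR(𝒜₁, 𝒜₂) = 1 - nnz (𝒜₁ᵀ * 𝒜₂) / m² ≥ 1 - (m + nnz S₁ + nnz S₂) / m²`. -/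
theorem shira_struct_nearly_orthogonal {m : ℕ} (S₁ S₂ : Matrix (Fin m) (Fin m) ℝ)
    (h : ∀ k, (∀ j, S₁ k j = 0) ∨ (∀ j, S₂ k j = 0)) :
    nnz (((1 : Matrix (Fin m) (Fin m) ℝ) + S₁)ᵀ * ((1 : Matrix (Fin m) (Fin m) ℝ) + S₂))
        ≤ m + nnz S₁ + nnz S₂ ∧
      (1 - (nnz (((1 : Matrix (Fin m) (Fin m) ℝ) + S₁)ᵀ *
            ((1 : Matrix (Fin m) (Fin m) ℝ) + S₂)) : ℝ) / (m ^ 2 : ℝ))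
        ≥ 1 - ((m + nnz S₁ + nnz S₂ : ℕ) : ℝ) / (m ^ 2 : ℝ) := by
  have hzero : S₁ᵀ * S₂ = 0 := by
    ext i j
    simp only [Matrix.mul_apply, Matrix.transpose_apply, Matrix.zero_apply]
    apply Finset.sum_eq_zero
    intro k _
    rcases h k with hk | hk
    · rw [hk i, zero_mul]
    · rw [hk j, mul_zero]
  have hprod : ((1 : Matrix (Fin m) (Fin m) ℝ) + S₁)ᵀ * ((1 : Matrix (Fin m) (Fin m) ℝ) + S₂)
      = 1 + S₁ᵀ + S₂ := by
    rw [Matrix.transpose_add, Matrix.transpose_one, add_mul, mul_add, mul_add,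
      one_mul, one_mul, mul_one, hzero, add_zero]
    abel
  have hmain : nnz (((1 : Matrix (Fin m) (Fin m) ℝ) + S₁)ᵀ *
      ((1 : Matrix (Fin m) (Fin m) ℝ) + S₂)) ≤ m + nnz S₁ + nnz S₂ := by
    rw [hprod]
    have hsub : {p : Fin m × Fin m | (1 + S₁ᵀ + S₂) p.1 p.2 ≠ 0} ⊆
        ({p : Fin m × Fin m | p.1 = p.2} ∪ {p | S₁ᵀ p.1 p.2 ≠ 0}) ∪ {p | S₂ p.1 p.2 ≠ 0} := by
      intro ⟨i, j⟩ hij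
      by_contra hc
      simp only [Set.mem_union, Set.mem_setOf_eq, not_or, not_not] at hc
      obtain ⟨⟨h1, h2⟩, h3⟩ := hc
      apply hij
      simp only [Matrix.transpose_apply] at h2
      simp [Matrix.add_apply, Matrix.one_apply, h1, Ne.symm h1, h2, h3]
    have hfin : ∀ s : Set (Fin m × Fin m), s.Finite := fun s => s.toFinite
    calc nnz (1 + S₁ᵀ + S₂)
        ≤ (({p : Fin m × Fin m | p.1 = p.2} ∪ {p | S₁ᵀ p.1 p.2 ≠ 0})
            ∪ {p | S₂ p.1 p.2 ≠ 0}).ncard :=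
          Set.ncard_le_ncard hsub (hfin _)
      _ ≤ ({p : Fin m × Fin m | p.1 = p.2} ∪ {p | S₁ᵀ p.1 p.2 ≠ 0}).ncard
            + {p : Fin m × Fin m | S₂ p.1 p.2 ≠ 0}.ncard :=
          Set.ncard_union_le _ _
      _ ≤ ({p : Fin m × Fin m | p.1 = p.2}.ncard + {p : Fin m × Fin m | S₁ᵀ p.1 p.2 ≠ 0}.ncard)
            + {p : Fin m × Fin m | S₂ p.1 p.2 ≠ 0}.ncard :=
          Nat.add_le_add_right (Set.ncard_union_le _ _) _
      _ = m + nnz S₁ + nnz S₂ := by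
          congr 2
          · have : {p : Fin m × Fin m | p.1 = p.2} =
                (fun i : Fin m => (i, i)) '' Set.univ := by
              ext ⟨i, j⟩
              simp [eq_comm, Prod.ext_iff]
            rw [this, Set.ncard_image_of_injective _ (fun a b hab => (Prod.mk.injEq _ _ _ _ ▸ hab).1),
              Set.ncard_univ]
            simp
          · exact nnz_transpose S₁
  refine ⟨hmain, ?_⟩
  have : (nnz (((1 : Matrix (Fin m) (Fin m) ℝ) + S₁)ᵀ *
      ((1 : Matrix (Fin m) (Fin m) ℝ) + S₂)) : ℝ) ≤ ((m + nnz S₁ + nnz S₂ : ℕ) : ℝ) := by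
    exact_mod_cast hmain
  rcases Nat.eq_zero_or_pos m with hm | hm
  · simp [hm]
  · have hm2 : (0 : ℝ) < (m : ℝ) ^ 2 := by positivity
    rw [ge_iff_le]
    apply sub_le_sub_left
    gcongr
end
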